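/- arXiv:1607.07593 — 6 statements merged into one kernel-verified Lean document; each statement's English description precedes it below -/
import Mathlib

section
/- Let g, Ψ ∈ ℂ[x,y] be polynomials. Then Ψ divides the polynomial H(g·Ψ) − g³·H(Ψ), where H(u) = u_xx·u_y² − 2·u_xy·u_x·u_y + u_yy·u_x². In other words, on the curve {Ψ = 0} one has H(g·Ψ) = g³·H(Ψ). -/
open MvPolynomial

/-- `H(u) = u_xx u_y² - 2 u_xy u_x u_y + u_yy u_x²` for a complex polynomial `u` in
two variables. -/
noncomputable def hessH (u : MvPolynomial (Fin 2) ℂ) : MvPolynomial (Fin 2) ℂ :=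
  pderiv 0 (pderiv 0 u) * (pderiv 1 u) ^ 2
    - 2 * pderiv 1 (pderiv 0 u) * pderiv 0 u * pderiv 1 u
    + pderiv 1 (pderiv 1 u) * (pderiv 0 u) ^ 2

/-!
Modulo `Ψ`, Leibniz' rule gives `D(gΨ) ≡ g·DΨ` and
`D'D(gΨ) ≡ D'g·DΨ + Dg·D'Ψ + g·D'DΨ`. Substituting into `H`, the first-order terms of `g`
combine into multiples of `Ψ_x Ψ_y - Ψ_y Ψ_x = 0`, leaving `g² · g·H(Ψ)`. Only the Leibniz
rule is used, so the identity holds for any two derivations of any commutative ring.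
-/

namespace Derivation

variable {R A : Type*} [CommSemiring R] [CommRing A] [Algebra R A]

/-- The Hessian of `u` evaluated on the Hamiltonian vector field `(D₁ u, -D₀ u)`. -/
def hamiltonianHess (D₀ D₁ : Derivation R A A) (u : A) : A :=
  D₀ (D₀ u) * D₁ u ^ 2 - 2 * D₁ (D₀ u) * D₀ u * D₁ u + D₁ (D₁ u) * D₀ u ^ 2

section MapEqZero

variable {B : Type*} [CommRing B] (f : A →+* B) {g Ψ : A}

theorem map_apply_mul_of_map_eq_zero (hΨ : f Ψ = 0) (D : Derivation R A A) :
    f (D (g * Ψ)) = f g * f (D Ψ) := by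
  simp [leibniz, hΨ]

theorem map_apply_apply_mul_of_map_eq_zero (hΨ : f Ψ = 0) (D D' : Derivation R A A) :
    f (D' (D (g * Ψ))) = f (D' g) * f (D Ψ) + f (D g) * f (D' Ψ) + f g * f (D' (D Ψ)) := by
  simp only [leibniz, smul_eq_mul, map_add, map_mul, hΨ]
  ring

theorem map_hamiltonianHess_mul_of_map_eq_zero (hΨ : f Ψ = 0) (D₀ D₁ : Derivation R A A) :
    f (hamiltonianHess D₀ D₁ (g * Ψ)) = f g ^ 3 * f (hamiltonianHess D₀ D₁ Ψ) := by
  simp only [hamiltonianHess, map_add, map_sub, map_mul, map_pow, map_ofNat,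
    map_apply_mul_of_map_eq_zero f hΨ, map_apply_apply_mul_of_map_eq_zero f hΨ]
  ring

end MapEqZero

theorem dvd_hamiltonianHess_mul_sub (g Ψ : A) (D₀ D₁ : Derivation R A A) :
    Ψ ∣ hamiltonianHess D₀ D₁ (g * Ψ) - g ^ 3 * hamiltonianHess D₀ D₁ Ψ := by
  rw [← Ideal.Quotient.eq_zero_iff_dvd, map_sub, map_mul, map_pow, sub_eq_zero]
  exact map_hamiltonianHess_mul_of_map_eq_zero _ (Ideal.Quotient.mk_singleton_self Ψ) D₀ D₁

end Derivation

/-- On the curve `{Ψ = 0}` one has `H(g·Ψ) = g³·H(Ψ)`: the polynomial `Ψ` divides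
`H(g·Ψ) - g³·H(Ψ)`. -/
theorem psi_dvd_hess_mul_sub (g Ψ : MvPolynomial (Fin 2) ℂ) :
    Ψ ∣ hessH (g * Ψ) - g ^ 3 * hessH Ψ :=
  Derivation.dvd_hamiltonianHess_mul_sub g Ψ (pderiv 0) (pderiv 1)
end

section
/- Let p > q ≥ 1 be integers and let w be holomorphic near 0 ∈ ℂ of the form w(t) = t^p·h(t), h holomorphic, h(0) ≠ 0; for t ≠ 0 small, let L_t = {(t^q + s·q·t^{q−1}, w(t) + s·w'(t)) : s ∈ ℂ} be the tangent line to the curve b(t) = (t^q, w(t)). Let z_a, w_a be holomorphic near 0 with z_a(0) = w_a(0) = 0, w_a not identically zero, and with the order of vanishing of z_a at 0 at least the order of vanishing of w_a at 0 (i.e., the germ a(τ) = (z_a(τ), w_a(τ)) is transverse to the z-axis). Suppose τ(t) is defined for all sufficiently small t ≠ 0, τ(t) → 0 as t → 0, and (z_a(τ(t)), w_a(τ(t))) ∈ L_t for all small t ≠ 0. Then w_a(τ(t)) / w(t) → 1 − p/q as t → 0, and z_a(τ(t)) = O(t^p) as t → 0. -/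
/-!
Eliminating the line parameter `s` between the two coordinate equations (using
`t · w'(t) = t ^ p · B(t)` with `B = p h + t h'`) writes `w_a(τ(t))` as
`t ^ p (h − B / q)` plus `z_a(τ(t)) · t ^ (p − q) B / q`. Transversality gives
`z_a(τ(t)) = O(w_a(τ(t)))`, so the second summand is `o(w_a(τ(t)))` and can be absorbed:
`w_a(τ(t)) = O(t ^ p)`, hence `z_a(τ(t)) = O(t ^ p)`. The second summand is then `o(t ^ p)`, and
dividing by `w = t ^ p h` leaves `(h(0) − p h(0) / q) / h(0) = 1 − p / q` in the limit.
-/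

open Filter Topology Asymptotics

namespace Asymptotics

variable {α 𝕜 E F : Type*} {l : Filter α}

theorem const_isBigO_of_tendsto [Norm E] [NormedAddCommGroup F] {f : α → F} {y : F}
    (hf : Tendsto f l (𝓝 y)) (hy : y ≠ 0) (c : E) : (fun _ => c) =O[l] f := by
  refine (isBigO_const_const c hy l).trans ((isBigO_const_left_iff_pos_le_norm hy).2 ?_)
  exact ⟨‖y‖ / 2, by positivity,
    hf.norm.eventually (le_mem_nhds (half_lt_self (norm_pos_iff.2 hy)))⟩

theorem mul_isBigO_self_of_tendsto [NormedField 𝕜] {f g : α → 𝕜} {c : 𝕜}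
    (hg : Tendsto g l (𝓝 c)) : (fun x => f x * g x) =O[l] f := by
  simpa using (isBigO_refl f l).mul (hg.isBigO_one 𝕜)

theorem isBigO_self_mul_of_tendsto [NormedField 𝕜] {f g : α → 𝕜} {c : 𝕜}
    (hg : Tendsto g l (𝓝 c)) (hc : c ≠ 0) : f =O[l] fun x => f x * g x := by
  simpa using (isBigO_refl f l).mul (const_isBigO_of_tendsto hg hc (1 : 𝕜))

theorem isBigO_of_eventuallyEq_add_mul [NormedField 𝕜] [Norm F] {A G Z δ : α → 𝕜} {f : α → F}
    (hA : A =ᶠ[l] (G + Z * δ)) (hG : G =O[l] f) (hZ : Z =O[l] A) (hδ : Tendsto δ l (𝓝 0)) :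
    A =O[l] f := by
  have hsmall : (fun x => Z x * δ x) =o[l] A := by
    simpa using hZ.mul_isLittleO ((isLittleO_one_iff 𝕜).2 hδ)
  refine hsmall.right_isBigO_sub.trans (hG.congr' ?_ EventuallyEq.rfl)
  filter_upwards [hA] with x hx
  simp [hx]

theorem tendsto_div_of_eventuallyEq_add_isLittleO [NormedField 𝕜] {A G E w : α → 𝕜} {L : 𝕜}
    (hA : A =ᶠ[l] (G + E)) (hG : Tendsto (fun x => G x / w x) l (𝓝 L)) (hE : E =o[l] w) :
    Tendsto (fun x => A x / w x) l (𝓝 L) := by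
  simpa using (hG.add hE.tendsto_div_nhds_zero).congr' (hA.mono fun x hx => by simp [hx, add_div])

end Asymptotics

theorem AnalyticAt.isBigO_of_analyticOrderAt_le {𝕜 E F : Type*} [NontriviallyNormedField 𝕜]
    [NormedAddCommGroup E] [NormedSpace 𝕜 E] [NormedAddCommGroup F] [NormedSpace 𝕜 F]
    {f : 𝕜 → E} {g : 𝕜 → F} {x : 𝕜} (hf : AnalyticAt 𝕜 f x) (hg : AnalyticAt 𝕜 g x)
    (hg_top : analyticOrderAt g x ≠ ⊤) (hord : analyticOrderAt g x ≤ analyticOrderAt f x) :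
    f =O[𝓝 x] g := by
  obtain ⟨k, hk, hk0, hgk⟩ := hg.analyticOrderAt_ne_top.1 hg_top
  rw [← Nat.cast_analyticOrderNatAt hg_top] at hord
  obtain ⟨u, hu, hfu⟩ := (natCast_le_analyticOrderAt hf).1 hord
  have huk : u =O[𝓝 x] k :=
    (hu.continuousAt.tendsto.isBigO_one 𝕜).trans (const_isBigO_of_tendsto hk.continuousAt hk0 1)
  exact ((isBigO_refl (fun z => (z - x) ^ analyticOrderNatAt g x) _).smul huk).congr'
    (hfu.mono fun _ h => h.symm) hgk.symm

section TangentLine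

variable {𝕜 : Type*} [NontriviallyNormedField 𝕜] {p q : ℕ} {h : 𝕜 → 𝕜}

/-- For `w t = t ^ p * h t` one has `t * deriv w t = t ^ p * eulerCoeff p h t`. -/
noncomputable def eulerCoeff (p : ℕ) (h : 𝕜 → 𝕜) (t : 𝕜) : 𝕜 := p * h t + t * deriv h t

theorem AnalyticAt.continuousAt_eulerCoeff [CompleteSpace 𝕜] {x : 𝕜} (hh : AnalyticAt 𝕜 h x) :
    ContinuousAt (eulerCoeff p h) x := by
  unfold eulerCoeff
  fun_prop

theorem eq_add_mul_of_mem_tangentLine [CharZero 𝕜] (hq : 1 ≤ q) (hpq : q ≤ p) {t s Z A : 𝕜}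
    (hh : DifferentiableAt 𝕜 h t) (hZ : Z = t ^ q + s * q * t ^ (q - 1))
    (hA : A = t ^ p * h t + s * deriv (fun t => t ^ p * h t) t) :
    A = t ^ p * (h t - eulerCoeff p h t / q) + Z * (t ^ (p - q) * eulerCoeff p h t / q) := by
  obtain ⟨k, rfl⟩ : ∃ k, q = k + 1 := ⟨q - 1, by omega⟩
  obtain ⟨m, rfl⟩ : ∃ m, p = m + (k + 1) := ⟨p - (k + 1), by omega⟩
  rw [((hasDerivAt_pow _ t).fun_mul hh.hasDerivAt).deriv,
    show m + (k + 1) - 1 = m + k by omega] at hA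
  simp only [eulerCoeff, Nat.add_sub_cancel] at hZ hA ⊢
  subst hZ hA
  field_simp
  ring

variable [CompleteSpace 𝕜]

theorem AnalyticAt.tendsto_pow_sub_mul_eulerCoeff (hh : AnalyticAt 𝕜 h 0) (hpq : q < p) :
    Tendsto (fun t => t ^ (p - q) * eulerCoeff p h t / q) (𝓝 0) (𝓝 0) := by
  have : ContinuousAt (fun t => t ^ (p - q) * eulerCoeff p h t / q) 0 :=
    ((continuousAt_id.pow _).mul hh.continuousAt_eulerCoeff).div_const _
  simpa [zero_pow (Nat.sub_ne_zero_of_lt hpq)] using this.tendsto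

theorem AnalyticAt.tendsto_sub_eulerCoeff_div [CharZero 𝕜] (hh : AnalyticAt 𝕜 h 0) (hq : q ≠ 0)
    (hh0 : h 0 ≠ 0) :
    Tendsto (fun t => (h t - eulerCoeff p h t / q) / h t) (𝓝 0) (𝓝 (1 - p / q)) := by
  have : ContinuousAt (fun t => (h t - eulerCoeff p h t / q) / h t) 0 :=
    (hh.continuousAt.sub (hh.continuousAt_eulerCoeff.div_const _)).div hh.continuousAt hh0
  convert this.tendsto using 2
  simp only [eulerCoeff, zero_mul, add_zero]
  field_simp

end TangentLine

theorem intersection_with_transverse_germ_asymptotics_general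
    (p q : ℕ) (hq : 1 ≤ q) (hpq : q < p)
    (h : ℂ → ℂ) (hh : AnalyticAt ℂ h 0) (hh0 : h 0 ≠ 0)
    (w : ℂ → ℂ) (hw : w = fun t : ℂ => t ^ p * h t)
    (za wa : ℂ → ℂ) (hza : AnalyticAt ℂ za 0) (hwa : AnalyticAt ℂ wa 0)
    (hwa_ne : ¬ ∀ᶠ τ in 𝓝 (0 : ℂ), wa τ = 0)
    (hord : analyticOrderAt wa 0 ≤ analyticOrderAt za 0)
    (τ : ℂ → ℂ) (hτ : Tendsto τ (𝓝[≠] (0 : ℂ)) (𝓝 0))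
    (hmem : ∀ᶠ t in 𝓝[≠] (0 : ℂ), ∃ s : ℂ,
      za (τ t) = t ^ q + s * (q : ℂ) * t ^ (q - 1) ∧
      wa (τ t) = w t + s * deriv w t) :
    Tendsto (fun t : ℂ => wa (τ t) / w t) (𝓝[≠] 0) (𝓝 (1 - (p : ℂ) / (q : ℂ))) ∧
      (fun t : ℂ => za (τ t)) =O[𝓝[≠] (0 : ℂ)] fun t : ℂ => t ^ p := by
  subst hw
  set G : ℂ → ℂ := fun t => t ^ p * (h t - eulerCoeff p h t / q)
  set r : ℂ → ℂ := fun t => t ^ (p - q) * eulerCoeff p h t / q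
  have hsplit : (fun t => wa (τ t)) =ᶠ[𝓝[≠] 0] (G + (fun t => za (τ t)) * r) := by
    filter_upwards [hmem, nhdsWithin_le_nhds hh.eventually_analyticAt] with t ⟨s, hZ, hA⟩ hht
    exact eq_add_mul_of_mem_tangentLine hq hpq.le hht.differentiableAt hZ hA
  have hZA : (fun t => za (τ t)) =O[𝓝[≠] 0] fun t => wa (τ t) :=
    (hza.isBigO_of_analyticOrderAt_le hwa (mt analyticOrderAt_eq_top.1 hwa_ne) hord).comp_tendsto hτ
  have hr : Tendsto r (𝓝[≠] 0) (𝓝 0) :=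
    (hh.tendsto_pow_sub_mul_eulerCoeff hpq).mono_left nhdsWithin_le_nhds
  have hG : G =O[𝓝[≠] 0] fun t => t ^ p := mul_isBigO_self_of_tendsto
    ((hh.continuousAt.sub (hh.continuousAt_eulerCoeff.div_const _)).tendsto.mono_left
      nhdsWithin_le_nhds)
  have hZp := hZA.trans (isBigO_of_eventuallyEq_add_mul hsplit hG hZA hr)
  refine ⟨tendsto_div_of_eventuallyEq_add_isLittleO hsplit ?_ ?_, hZp⟩
  · refine ((hh.tendsto_sub_eulerCoeff_div (by omega) hh0).mono_left nhdsWithin_le_nhds).congr' ?_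
    filter_upwards [self_mem_nhdsWithin] with t (ht : t ≠ 0)
    exact (mul_div_mul_left _ _ (pow_ne_zero p ht)).symm
  · refine (hZp.mul_isLittleO ((isLittleO_one_iff ℂ).2 hr)).trans_isBigO ?_
    simpa using isBigO_self_mul_of_tendsto
      (hh.continuousAt.tendsto.mono_left nhdsWithin_le_nhds) hh0

/-- Asymptotics of the intersection points of the tangent line to the nonlinear germ
`b(t) = (t^q, w(t))`, `w(t) = t^p h(t)`, `h(0) ≠ 0`, with a germ `a(τ) = (z_a(τ), w_a(τ))`
transverse to the `z`-axis: any family of intersection points `a(τ(t)) ∈ T_t b` with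
`τ(t) → 0` satisfies `w_a(τ(t)) ∼ (1 - p/q)·w(t)` and `z_a(τ(t)) = O(t^p)`. -/
theorem intersection_with_transverse_germ_asymptotics
    (p q : ℕ) (hq : 1 ≤ q) (hpq : q < p)
    (h : ℂ → ℂ) (hh : AnalyticAt ℂ h 0) (hh0 : h 0 ≠ 0)
    (w : ℂ → ℂ) (hw : w = fun t : ℂ => t ^ p * h t)
    (za wa : ℂ → ℂ) (hza : AnalyticAt ℂ za 0) (hwa : AnalyticAt ℂ wa 0)
    (hza0 : za 0 = 0) (hwa0 : wa 0 = 0)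
    (hwa_ne : ¬ ∀ᶠ τ in 𝓝 (0 : ℂ), wa τ = 0)
    (hord : analyticOrderAt wa 0 ≤ analyticOrderAt za 0)
    (τ : ℂ → ℂ) (hτ : Tendsto τ (𝓝[≠] (0 : ℂ)) (𝓝 0))
    (hmem : ∀ᶠ t in 𝓝[≠] (0 : ℂ), ∃ s : ℂ,
      za (τ t) = t ^ q + s * (q : ℂ) * t ^ (q - 1) ∧
      wa (τ t) = w t + s * deriv w t) :
    Tendsto (fun t : ℂ => wa (τ t) / w t) (𝓝[≠] 0) (𝓝 (1 - (p : ℂ) / (q : ℂ))) ∧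
      (fun t : ℂ => za (τ t)) =O[𝓝[≠] (0 : ℂ)] fun t : ℂ => t ^ p :=
  intersection_with_transverse_germ_asymptotics_general p q hq hpq h hh hh0 w hw za wa hza hwa
    hwa_ne hord τ hτ hmem
end

section
/- Let q_b < p_b and q_a < p_a be positive integers with p_a/q_a = p_b/q_b = r. Let w_b(t) = t^{p_b}·h_b(t) and w_a(τ) = τ^{p_a}·h_a(τ) be holomorphic near 0 ∈ ℂ with h_b(0) = c_b ≠ 0 and h_a(0) = c_a ≠ 0. For small t ≠ 0 let L_t = {(t^{q_b} + s·q_b·t^{q_b−1}, w_b(t) + s·w_b'(t)) : s ∈ ℂ} be the tangent line to the curve b(t) = (t^{q_b}, w_b(t)). Suppose τ(t) is defined for all sufficiently small t ≠ 0, τ(t) → 0 as t → 0, the point (τ(t)^{q_a}, w_a(τ(t))) lies on L_t for all small t ≠ 0, and the limit L = lim_{t→0} τ(t)^{q_a} / t^{q_b} exists in ℂ. Then there exists ζ ∈ ℂ with (c_a/c_b)·ζ^{p_a} − r·ζ^{q_a} + r − 1 = 0 and ζ^{q_a} = L. -/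
/-!
Eliminating the line parameter `s` gives
`w_a(τ)/t^{p_b} = h_b(t) + (τ^{q_a}/t^{q_b} - 1)(p_b h_b(t) + t h_b'(t))/q_b`,
so `τ^{p_a}/t^{p_b}` tends to `K = c_b (1 + r (L - 1))/c_a`, and it remains to find `ζ` with
`ζ^{p_a} = K` and `ζ^{q_a} = L`. Write `p_a = g p`, `q_a = g q` with `p, q` coprime; then
`p_b = p m`, `q_b = q m`, and `u = τ^g/t^m` has `u^p → K`, `u^q → L`. By Bézout `u` itself
converges when `L ≠ 0`, and any `g`-th root of its limit is the required `ζ`.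
-/

open Filter Topology

lemma Nat.exists_eq_mul_of_mul_eq_mul_of_coprime {a b c d : ℕ} (hab : a.Coprime b) (hb : b ≠ 0)
    (h : a * d = c * b) : ∃ m, c = a * m ∧ d = b * m := by
  obtain ⟨m, rfl⟩ : b ∣ d := hab.symm.dvd_of_dvd_mul_left ⟨c, by rw [h, mul_comm]⟩
  refine ⟨m, Nat.eq_of_mul_eq_mul_right (Nat.pos_of_ne_zero hb) ?_, rfl⟩
  rw [← h]
  ring

section TangentLine

variable {𝕜 : Type*}

lemma div_pow_eq_of_mem_tangentLine [Field 𝕜] {p q : ℕ} (hq : 1 ≤ q) (hq0 : (q : 𝕜) ≠ 0)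
    {t s T W H H' : 𝕜} (ht : t ≠ 0) (hT : T = t ^ q + s * q * t ^ (q - 1))
    (hW : W = t ^ p * H + s * (p * t ^ (p - 1) * H + t ^ p * H')) :
    W / t ^ p = H + (T / t ^ q - 1) * ((p * H + t * H') / q) := by
  obtain ⟨q, rfl⟩ := Nat.exists_eq_add_of_le' hq
  subst hT hW
  rcases p with _ | p <;>
  · simp only [Nat.add_sub_cancel, pow_zero, pow_succ]
    field_simp
    ring

variable [NontriviallyNormedField 𝕜]

lemma deriv_pow_mul {h : 𝕜 → 𝕜} {t : 𝕜} (hh : DifferentiableAt 𝕜 h t) (p : ℕ) :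
    deriv (fun t => t ^ p * h t) t = p * t ^ (p - 1) * h t + t ^ p * deriv h t := by
  rw [deriv_fun_mul (differentiableAt_pow p) hh, deriv_pow_field]

lemma tendsto_div_pow_of_mem_tangentLine [CompleteSpace 𝕜] [CharZero 𝕜] {h : 𝕜 → 𝕜}
    (hh : AnalyticAt 𝕜 h 0) {p q : ℕ} (hq : 1 ≤ q) {T W : 𝕜 → 𝕜} {D : 𝕜}
    (hD : Tendsto (fun t => T t / t ^ q) (𝓝[≠] 0) (𝓝 D))
    (hmem : ∀ᶠ t in 𝓝[≠] 0, ∃ s, T t = t ^ q + s * q * t ^ (q - 1) ∧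
      W t = t ^ p * h t + s * deriv (fun t => t ^ p * h t) t) :
    Tendsto (fun t => W t / t ^ p) (𝓝[≠] 0) (𝓝 (h 0 * (1 + (D - 1) * (p / q)))) := by
  have hq0 : (q : 𝕜) ≠ 0 := Nat.cast_ne_zero.mpr (by omega)
  have hdiff : ∀ᶠ t in 𝓝[≠] (0 : 𝕜), DifferentiableAt 𝕜 h t :=
    (hh.eventually_analyticAt.filter_mono nhdsWithin_le_nhds).mono fun _ ht => ht.differentiableAt
  have hid : ∀ᶠ t in 𝓝[≠] (0 : 𝕜),
      h t + (T t / t ^ q - 1) * ((p * h t + t * deriv h t) / q) = W t / t ^ p := by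
    filter_upwards [hmem, hdiff, self_mem_nhdsWithin] with t ⟨s, hT, hW⟩ hdt ht
    rw [deriv_pow_mul hdt] at hW
    exact (div_pow_eq_of_mem_tangentLine hq hq0 ht hT hW).symm
  have hlim : Tendsto (fun t => h t + (T t / t ^ q - 1) * ((p * h t + t * deriv h t) / q))
      (𝓝[≠] 0) (𝓝 (h 0 + (D - 1) * ((p * h 0 + 0 * deriv h 0) / q))) := by
    have hh0 := hh.continuousAt.tendsto.mono_left (nhdsWithin_le_nhds (s := {0}ᶜ))
    have hdh0 := hh.deriv.continuousAt.tendsto.mono_left (nhdsWithin_le_nhds (s := {0}ᶜ))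
    have ht0 := (tendsto_id (x := 𝓝 (0 : 𝕜))).mono_left (nhdsWithin_le_nhds (s := {0}ᶜ))
    exact hh0.add ((hD.sub_const 1).mul (((hh0.const_mul _).add (ht0.mul hdh0)).div_const _))
  convert hlim.congr' hid using 2
  ring

end TangentLine

section Roots

variable {α 𝕜 : Type*} [NormedField 𝕜] {l : Filter α} [l.NeBot]

lemma pow_eq_pow_of_tendsto_pow {f : α → 𝕜} {p q : ℕ} {K L : 𝕜}
    (hK : Tendsto (f · ^ p) l (𝓝 K)) (hL : Tendsto (f · ^ q) l (𝓝 L)) : K ^ q = L ^ p :=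
  tendsto_nhds_unique (hK.pow q) <| by simpa only [← pow_mul, mul_comm p q] using hL.pow p

lemma exists_tendsto_of_tendsto_pow_of_coprime {f : α → 𝕜} {p q : ℕ}
    (hpq : p.Coprime q) (hq : q ≠ 0) {K L : 𝕜} (hK : Tendsto (f · ^ p) l (𝓝 K))
    (hL : Tendsto (f · ^ q) l (𝓝 L)) (hL0 : L ≠ 0) : ∃ c, Tendsto f l (𝓝 c) := by
  have hK0 : K ≠ 0 := by
    rintro rfl
    exact hL0 (pow_eq_zero_iff'.mp ((pow_eq_pow_of_tendsto_pow hK hL).symm.trans (zero_pow hq))).1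
  obtain ⟨A, B, hbezout⟩ := Nat.isCoprime_iff_coprime.mpr hpq
  have hf0 : ∀ᶠ a in l, f a ≠ 0 :=
    (hL.eventually_ne hL0).mono fun a ha h => ha (by rw [h, zero_pow hq])
  refine ⟨K ^ A * L ^ B, ((hK.zpow₀ A (Or.inl hK0)).mul (hL.zpow₀ B (Or.inl hL0))).congr'
    (hf0.mono fun a ha => ?_)⟩
  rw [← zpow_natCast, ← zpow_natCast, ← zpow_mul, ← zpow_mul, ← zpow_add₀ ha, mul_comm (p : ℤ),
    mul_comm (q : ℤ), hbezout, zpow_one]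

lemma exists_pow_eq_of_tendsto_div_pow [IsAlgClosed 𝕜] {x y : α → 𝕜}
    {pa qa pb qb : ℕ} (hpa : pa ≠ 0) (hqa : qa ≠ 0) (hratio : pa * qb = pb * qa) {K L : 𝕜}
    (hK : Tendsto (fun a => x a ^ pa / y a ^ pb) l (𝓝 K))
    (hL : Tendsto (fun a => x a ^ qa / y a ^ qb) l (𝓝 L)) :
    ∃ ζ : 𝕜, ζ ^ pa = K ∧ ζ ^ qa = L := by
  by_cases hL0 : L = 0
  · have hKL : K ^ qa = L ^ pa := tendsto_nhds_unique (hK.pow qa) <| by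
      simpa only [div_pow, ← pow_mul, mul_comm, hratio] using hL.pow pa
    refine ⟨0, ?_, by rw [hL0, zero_pow hqa]⟩
    rw [hL0, zero_pow hpa] at hKL
    rw [(pow_eq_zero_iff hqa).mp hKL, zero_pow hpa]
  obtain ⟨g, p, q, hg, hpq, rfl, rfl⟩ := Nat.exists_coprime' (Nat.gcd_pos_of_pos_right pa
    (Nat.pos_of_ne_zero hqa))
  have hq : q ≠ 0 := left_ne_zero_of_mul hqa
  obtain ⟨m, rfl, rfl⟩ := Nat.exists_eq_mul_of_mul_eq_mul_of_coprime (c := pb) (d := qb) hpq hq <|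
    Nat.eq_of_mul_eq_mul_right hg (by linarith [hratio])
  have hu : ∀ n a, (x a ^ g / y a ^ m) ^ n = x a ^ (n * g) / y a ^ (n * m) := fun n a => by
    rw [div_pow, ← pow_mul, ← pow_mul, mul_comm g, mul_comm m]
  simp only [← hu] at hK hL
  obtain ⟨c, hc⟩ := exists_tendsto_of_tendsto_pow_of_coprime hpq hq hK hL hL0
  obtain ⟨ζ, rfl⟩ := IsAlgClosed.exists_pow_nat_eq c hg
  exact ⟨ζ, by rw [pow_mul', tendsto_nhds_unique (hc.pow p) hK],
    by rw [pow_mul', tendsto_nhds_unique (hc.pow q) hL]⟩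

end Roots

theorem intersection_with_tangent_germ_same_puiseux_exponent_general
    (pa qa pb qb : ℕ) (hqa : 1 ≤ qa) (hpa : qa < pa) (hqb : 1 ≤ qb)
    (hratio : pa * qb = pb * qa)
    (r : ℂ) (hr : r = (pa : ℂ) / (qa : ℂ))
    (ca cb : ℂ) (hca : ca ≠ 0) (hcb : cb ≠ 0)
    (ha hb : ℂ → ℂ) (hha : AnalyticAt ℂ ha 0) (hhb : AnalyticAt ℂ hb 0)
    (hha0 : ha 0 = ca) (hhb0 : hb 0 = cb)
    (wa wb : ℂ → ℂ)
    (hwa : wa = fun t : ℂ => t ^ pa * ha t) (hwb : wb = fun t : ℂ => t ^ pb * hb t)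
    (τ : ℂ → ℂ) (hτ : Tendsto τ (𝓝[≠] (0 : ℂ)) (𝓝 0))
    (hmem : ∀ᶠ t in 𝓝[≠] (0 : ℂ), ∃ s : ℂ,
      τ t ^ qa = t ^ qb + s * (qb : ℂ) * t ^ (qb - 1) ∧
      wa (τ t) = wb t + s * deriv wb t)
    (L : ℂ) (hL : Tendsto (fun t : ℂ => τ t ^ qa / t ^ qb) (𝓝[≠] 0) (𝓝 L)) :
    ∃ ζ : ℂ, (ca / cb) * ζ ^ pa - r * ζ ^ qa + r - 1 = 0 ∧ ζ ^ qa = L := by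
  subst hwa hwb
  have hr' : (pb : ℂ) / qb = r := by
    rw [hr, div_eq_div_iff (by norm_cast; omega) (by norm_cast; omega)]
    exact_mod_cast hratio.symm
  have hW := tendsto_div_pow_of_mem_tangentLine hhb hqb hL hmem
  rw [hhb0, hr'] at hW
  have hhaτ : Tendsto (fun t => ha (τ t)) (𝓝[≠] 0) (𝓝 ca) :=
    hha0 ▸ hha.continuousAt.tendsto.comp hτ
  have hK : Tendsto (fun t => τ t ^ pa / t ^ pb) (𝓝[≠] 0) (𝓝 (cb * (1 + (L - 1) * r) / ca)) := by
    refine (hW.div hhaτ hca).congr' ?_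
    filter_upwards [hhaτ.eventually_ne hca] with t ht
    simp only [Pi.div_apply]
    rw [div_right_comm, mul_div_cancel_right₀ _ ht]
  obtain ⟨ζ, hζp, hζq⟩ := exists_pow_eq_of_tendsto_div_pow (by omega) (by omega) hratio hK hL
  refine ⟨ζ, ?_, hζq⟩
  rw [hζp, hζq]
  field_simp
  ring

/-- Intersections of the tangent line to the germ `b(t) = (t^{q_b}, w_b(t))` with a germ
`a(τ) = (τ^{q_a}, w_a(τ))` tangent to it, having the same projective Puiseux exponent
`r = p_a/q_a = p_b/q_b`: the limit `L` of `τ(t)^{q_a}/t^{q_b}` along a family of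
intersection points is the `q_a`-th power of a root `ζ` of the polynomial
`R_{p_a,q_a,c}(ζ) = (c_a/c_b)·ζ^{p_a} - r·ζ^{q_a} + r - 1`. -/
theorem intersection_with_tangent_germ_same_puiseux_exponent
    (pa qa pb qb : ℕ) (hqa : 1 ≤ qa) (hpa : qa < pa) (hqb : 1 ≤ qb) (hpb : qb < pb)
    (hratio : pa * qb = pb * qa)
    (r : ℂ) (hr : r = (pa : ℂ) / (qa : ℂ))
    (ca cb : ℂ) (hca : ca ≠ 0) (hcb : cb ≠ 0)
    (ha hb : ℂ → ℂ) (hha : AnalyticAt ℂ ha 0) (hhb : AnalyticAt ℂ hb 0)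
    (hha0 : ha 0 = ca) (hhb0 : hb 0 = cb)
    (wa wb : ℂ → ℂ)
    (hwa : wa = fun t : ℂ => t ^ pa * ha t) (hwb : wb = fun t : ℂ => t ^ pb * hb t)
    (τ : ℂ → ℂ) (hτ : Tendsto τ (𝓝[≠] (0 : ℂ)) (𝓝 0))
    (hmem : ∀ᶠ t in 𝓝[≠] (0 : ℂ), ∃ s : ℂ,
      τ t ^ qa = t ^ qb + s * (qb : ℂ) * t ^ (qb - 1) ∧
      wa (τ t) = wb t + s * deriv wb t)
    (L : ℂ) (hL : Tendsto (fun t : ℂ => τ t ^ qa / t ^ qb) (𝓝[≠] 0) (𝓝 L)) :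
    ∃ ζ : ℂ, (ca / cb) * ζ ^ pa - r * ζ ^ qa + r - 1 = 0 ∧ ζ ^ qa = L :=
  intersection_with_tangent_germ_same_puiseux_exponent_general pa qa pb qb hqa hpa hqb hratio r hr
    ca cb hca hcb ha hb hha hhb hha0 hhb0 wa wb hwa hwb τ hτ hmem L hL
end

section
/- Let p > q ≥ 1 be integers, let r = p/q (viewed as a complex number), and let c ∈ ℂ. Consider the polynomial W(θ) = (r−1)·θ^p − r·θ^{p−q} + c ∈ ℂ[θ], which has degree p since r ≠ 1. Then the sum over the p roots θ_1, …, θ_p of W (counted with multiplicity) of the q-th powers equals Σ_{j=1}^p θ_j^q = p/(r−1) = p·q/(p−q). -/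
/-!
All monomials of `W` strictly between degrees `p - q` and `p` vanish, so by Vieta the elementary
symmetric functions `e₁, …, e_{q-1}` of its roots vanish, and Newton's identity collapses to
`∑ θⱼ^q = (-1)^(q+1) q e_q`. Vieta once more gives `(r - 1)(-1)^q e_q = -r`, hence
`(r - 1) ∑ θⱼ^q = q r = p`.
-/

open Polynomial

namespace Multiset

variable {R : Type*} [CommRing R]

theorem sum_map_pow_eq_of_esymm_eq_zero (s : Multiset R) {k : ℕ} (hk : 0 < k)
    (h : ∀ i ∈ Set.Ioo 0 k, s.esymm i = 0) :
    (s.map (· ^ k)).sum = (-1) ^ (k + 1) * k * s.esymm k := by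
  obtain ⟨l, rfl⟩ : ∃ l : List R, (l : Multiset R) = s := Quot.exists_rep s
  have hl : (Finset.univ.val.map l.get : Multiset R) = l := by
    rw [Fin.univ_val_map, List.ofFn_get]
  have newton := congrArg (MvPolynomial.aeval l.get)
    (MvPolynomial.psum_eq_mul_esymm_sub_sum (Fin l.length) R k hk)
  simp only [MvPolynomial.psum, map_sum, map_sub, map_mul, map_pow, map_neg, map_one,
    map_natCast, MvPolynomial.aeval_X, MvPolynomial.aeval_esymm_eq_multiset_esymm, hl] at newton
  rw [← hl, Multiset.map_map, ← Finset.sum_eq_multiset_sum, hl, Function.comp_def, newton,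
    sub_eq_self]
  exact Finset.sum_eq_zero fun a ha => by
    rw [h a.1 (Finset.mem_filter.mp ha).2, mul_zero, zero_mul]

end Multiset

namespace Polynomial

variable {R : Type*} [CommRing R] [IsDomain R]

theorem leadingCoeff_mul_sum_pow_roots_of_coeff_eq_zero {P : R[X]}
    (hroots : P.roots.card = P.natDegree) {k : ℕ} (hk : 0 < k) (hkn : k ≤ P.natDegree)
    (h : ∀ i ∈ Set.Ioo 0 k, P.coeff (P.natDegree - i) = 0) :
    P.leadingCoeff * (P.roots.map (· ^ k)).sum = -k * P.coeff (P.natDegree - k) := by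
  have hP : P.leadingCoeff ≠ 0 := leadingCoeff_ne_zero.mpr <| by rintro rfl; simp at hkn; omega
  have vieta : ∀ i ≤ P.natDegree,
      P.coeff (P.natDegree - i) = P.leadingCoeff * (-1) ^ i * P.roots.esymm i := fun i hi => by
    rw [coeff_eq_esymm_roots_of_card hroots (Nat.sub_le _ _), Nat.sub_sub_self hi]
  have hesymm : ∀ i ∈ Set.Ioo 0 k, P.roots.esymm i = 0 := fun i hi => by
    simpa [hP] using (vieta i (hi.2.le.trans hkn)).symm.trans (h i hi)
  rw [P.roots.sum_map_pow_eq_of_esymm_eq_zero hk hesymm, vieta k hkn]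
  ring

end Polynomial

/-- The polynomial `W(θ) = (r-1)θ^p - r θ^{p-q} + c`, with `r = p/q > 1`, has `p` roots
(counted with multiplicity), and the sum of their `q`-th powers equals `p/(r-1)`. -/
theorem sum_of_qth_powers_of_roots
    (p q : ℕ) (hq : 1 ≤ q) (hpq : q < p) (c : ℂ)
    (r : ℂ) (hr : r = (p : ℂ) / (q : ℂ))
    (W : Polynomial ℂ)
    (hW : W = Polynomial.C (r - 1) * X ^ p - Polynomial.C r * X ^ (p - q)
        + Polynomial.C c) :
    W.roots.card = p ∧ (W.roots.map (fun θ : ℂ => θ ^ q)).sum = (p : ℂ) / (r - 1) := by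
  have hqr : (q : ℂ) * r = p := by
    rw [hr, mul_div_cancel₀]
    exact_mod_cast (by omega : q ≠ 0)
  have hr1 : r - 1 ≠ 0 := by
    intro h
    have : (q : ℂ) = p := by linear_combination hqr - q * h
    norm_cast at this
    omega
  have hcoeff : ∀ n, W.coeff n = (if n = p then r - 1 else 0)
      - (if n = p - q then r else 0) + (if n = 0 then c else 0) := by
    simp only [hW, coeff_add, coeff_sub, coeff_C_mul, coeff_X_pow, coeff_C, mul_ite, mul_one,
      mul_zero, implies_true]
  have hdeg : W.natDegree = p := by
    rw [hW]
    compute_degree!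
    simpa [show p ≠ p - q by omega, show p ≠ 0 by omega] using hr1
  have hroots : W.roots.card = W.natDegree := splits_iff_card_roots.mp (IsAlgClosed.splits W)
  refine ⟨hroots.trans hdeg, ?_⟩
  have hsum := leadingCoeff_mul_sum_pow_roots_of_coeff_eq_zero hroots hq (hdeg ▸ hpq.le)
    fun i ⟨hi0, hiq⟩ => by
      simp [hdeg, hcoeff, show p - i ≠ p by omega, show p - i ≠ p - q by omega,
        show p - i ≠ 0 by omega]
  simp [leadingCoeff, hdeg, hcoeff, show p ≠ p - q by omega, show p ≠ 0 by omega,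
    show p - q ≠ p by omega, show p - q ≠ 0 by omega] at hsum
  rw [eq_div_iff hr1]
  linear_combination hsum + hqr
end

section
/- Let r > 1 be a rational number and let (p_i, q_i, c_i), i = 1, …, N, be a finite family with p_i, q_i positive integers, p_i > q_i, p_i/q_i = r for all i, and c_i ∈ ℂ \ {0}. Let W_i = W_{p_i,q_i,c_i}, let P be the multiset union over i of the q_i-th powers θ^{q_i} of the roots θ of W_i (with multiplicity), let k₁ be the multiplicity of 2 in P, let k₂ be the multiplicity of (r−2)/(r−1) in P, and let Π = Σ_{i=1}^N p_i. If (r−2)·Π = k₂ − k₁·(r−1), then r = 2. -/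
/-! For `v ∉ {0, 1, r/(r-1)}`, a root `θ` of `W_{p,q,c}` with `θ^q = v` satisfies
`θ^(p-q) = -c/((r-1)v - r)`, so by Bézout `θ^gcd(p,q)` is determined by `v`; and `θ` is a
simple root, because `p = rq` makes `W'(θ)` a nonzero multiple of `v - 1`. Hence `v` occurs at
most `gcd(p,q) = p / num r` times among the `θ^q`, and summing over the family gives
`num r · k ≤ Π` for both `k₁` and `k₂`. Fed into the relation, these bounds give
`num r · |r - 2| < r`, whereas `|r - 2| ≥ 1 / den r = r / num r` as soon as `r ≠ 2`. -/

open Polynomial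
open scoped Classical

theorem Rat.num_natCast_div_mul_gcd {p q : ℕ} (hq : 0 < q) :
    ((p : ℚ) / q).num * Nat.gcd p q = p := by
  rw [Rat.natCast_div_eq_divInt, Rat.num_divInt, Int.sign_natCast_of_ne_zero hq.ne', one_mul,
    Int.gcd_natCast_natCast, Nat.gcd_comm]
  exact Int.ediv_mul_cancel (Int.natCast_dvd_natCast.mpr (Nat.gcd_dvd_left p q))

theorem Rat.abs_le_abs_num_mul_sub (r : ℚ) {n : ℤ} (h : r ≠ n) :
    |r| ≤ |(r.num : ℚ) * (r - n)| := by
  have hden : (0 : ℚ) < r.den := by exact_mod_cast r.pos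
  have hint : (r - n) * r.den = ((r.num - n * r.den : ℤ) : ℚ) := by
    push_cast
    rw [sub_mul, Rat.mul_den_eq_num]
  have hone : 1 ≤ |(r - n) * r.den| := by
    rw [hint, ← Int.cast_abs]
    refine mod_cast Int.one_le_abs fun h0 => h ?_
    rw [← sub_eq_zero, ← mul_eq_zero_iff_right hden.ne', hint, h0, Int.cast_zero]
  calc |r| = |(r.num : ℚ)| / r.den := by
        rw [← abs_of_pos hden, ← abs_div, Rat.num_div_den]
    _ ≤ |(r.num : ℚ)| * |(r - n) * r.den| / r.den := by
        gcongr; exact le_mul_of_one_le_right (abs_nonneg _) hone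
    _ = _ := by rw [abs_mul, abs_mul, abs_of_pos hden]; field_simp

theorem sub_two_mul_ne_of_num_mul_le {r Pi k₁ k₂ : ℚ} (hr : 1 < r) (h : r ≠ 2) (hPi : 0 < Pi)
    (hk₁ : 0 ≤ k₁) (hk₂ : 0 ≤ k₂) (h₁ : r.num * k₁ ≤ Pi) (h₂ : r.num * k₂ ≤ Pi) :
    (r - 2) * Pi ≠ k₂ - k₁ * (r - 1) := by
  intro hrel
  have key := Rat.abs_le_abs_num_mul_sub r (n := 2) (by exact_mod_cast h)
  have hnum : (0 : ℚ) < r.num := by exact_mod_cast Rat.num_pos.mpr (by linarith)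
  push_cast at key
  rw [abs_mul, abs_of_pos hnum, abs_of_pos (by linarith)] at key
  rcases lt_or_gt_of_ne h with hlt | hgt
  · rw [abs_of_neg (by linarith)] at key
    nlinarith
  · rw [abs_of_pos (by linarith)] at key
    nlinarith

theorem pow_gcd_eq_zpow_mul_zpow {G₀ : Type*} [CommGroupWithZero G₀] {θ : G₀} (hθ : θ ≠ 0)
    (m n : ℕ) : θ ^ m.gcd n = (θ ^ m) ^ m.gcdA n * (θ ^ n) ^ m.gcdB n := by
  rw [← zpow_natCast, Nat.gcd_eq_gcd_ab, zpow_add₀ hθ, zpow_mul, zpow_mul, zpow_natCast,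
    zpow_natCast]

theorem Polynomial.card_filter_roots_le_of_pow_eq {R : Type*} [CommRing R] [IsDomain R]
    (f : R[X]) (P : R → Prop) [DecidablePred P] {d : ℕ} (hd : 0 < d) (w : R)
    (h : ∀ θ ∈ f.roots, P θ → f.rootMultiplicity θ ≤ 1 ∧ θ ^ d = w) :
    Multiset.card (f.roots.filter P) ≤ d := by
  have hnodup : (f.roots.filter P).Nodup := by
    refine Multiset.nodup_iff_count_le_one.mpr fun θ => ?_
    rw [Multiset.count_filter]
    split_ifs with hP
    · by_cases hθ : θ ∈ f.roots
      · exact (count_roots f ▸ (h θ hθ hP).1)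
      · rw [Multiset.count_eq_zero_of_notMem hθ]; exact zero_le_one
    · exact zero_le_one
  have hsub : f.roots.filter P ≤ nthRoots d w :=
    (Multiset.le_iff_subset hnodup).mpr fun θ hθ => by
      obtain ⟨hroot, hP⟩ := Multiset.mem_filter.mp hθ
      exact (mem_nthRoots hd).mpr (h θ hroot hP).2
  exact (Multiset.card_le_card hsub).trans (card_nthRoots d w)

noncomputable def trinomialW {K : Type*} [Field K] (r : K) (p q : ℕ) (c : K) : K[X] :=
  C (r - 1) * X ^ p - C r * X ^ (p - q) + C c

section trinomialW

variable {K : Type*} [Field K] {r c v θ : K} {p q : ℕ}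

theorem coeff_trinomialW_self (hq : 0 < q) (hqp : q < p) :
    (trinomialW r p q c).coeff p = r - 1 := by
  simp only [trinomialW, coeff_add, coeff_sub, coeff_C_mul, coeff_X_pow, coeff_C]
  rw [if_pos trivial, if_neg (by omega), if_neg (by omega)]
  ring

theorem trinomialW_ne_zero (hr : r ≠ 1) (hq : 0 < q) (hqp : q < p) :
    trinomialW r p q c ≠ 0 := fun h => by
  have := coeff_trinomialW_self (r := r) (c := c) hq hqp
  rw [h, coeff_zero, eq_comm, sub_eq_zero] at this
  exact hr this

theorem pow_sub_mul_eq_neg_of_isRoot_trinomialW (hqp : q ≤ p)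
    (hθ : (trinomialW r p q c).IsRoot θ) :
    θ ^ (p - q) * ((r - 1) * θ ^ q - r) = -c := by
  have hsplit : θ ^ p = θ ^ (p - q) * θ ^ q := by rw [← pow_add, Nat.sub_add_cancel hqp]
  simp only [trinomialW, IsRoot, eval_add, eval_sub, eval_mul, eval_C, eval_pow, eval_X,
    hsplit] at hθ
  linear_combination hθ

theorem derivative_trinomialW :
    derivative (trinomialW r p q c) =
      C ((r - 1) * p) * X ^ (p - 1) - C (r * (p - q : ℕ)) * X ^ (p - q - 1) := by
  simp only [trinomialW, derivative_add, derivative_sub, derivative_C_mul, derivative_X_pow,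
    derivative_C, C_mul]
  ring

variable [CharZero K]

theorem rootMultiplicity_trinomialW_le_one (hq : 0 < q) (hqp : q < p) (hpr : (p : K) = r * q)
    (hθ : θ ≠ 0) (hθq : θ ^ q ≠ 1) : (trinomialW r p q c).rootMultiplicity θ ≤ 1 := by
  have hq0 : (q : K) ≠ 0 := Nat.cast_ne_zero.mpr hq.ne'
  have hr0 : r ≠ 0 := by
    rintro rfl
    rw [zero_mul, Nat.cast_eq_zero] at hpr
    omega
  have hr1 : r ≠ 1 := by
    rintro rfl
    rw [one_mul, Nat.cast_inj] at hpr
    omega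
  by_contra! hmult
  obtain ⟨-, hderiv⟩ :=
    (one_lt_rootMultiplicity_iff_isRoot (trinomialW_ne_zero hr1 hq hqp)).mp hmult
  have hsplit : θ ^ (p - 1) = θ ^ (p - q - 1) * θ ^ q := by
    rw [← pow_add]; congr 1; omega
  simp only [derivative_trinomialW, IsRoot, eval_sub, eval_mul, eval_C, eval_pow, eval_X,
    hsplit, Nat.cast_sub hqp.le, hpr] at hderiv
  -- with `p = r q` the derivative at `θ` factors as `r q (r - 1) θ^(p-q-1) (θ^q - 1)`
  have hfactor : r * q * (r - 1) * θ ^ (p - q - 1) * (θ ^ q - 1) = 0 := by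
    linear_combination hderiv
  simp [hr0, hq0, sub_eq_zero, hr1, hθ, hθq] at hfactor

theorem count_map_pow_roots_trinomialW_le_gcd (hq : 0 < q) (hqp : q < p) (hpr : (p : K) = r * q)
    (hv0 : v ≠ 0) (hv1 : v ≠ 1) (hvr : (r - 1) * v ≠ r) :
    ((trinomialW r p q c).roots.map (· ^ q)).count v ≤ p.gcd q := by
  have hqp' : q ≤ p := hqp.le
  rw [Multiset.count_map]
  refine card_filter_roots_le_of_pow_eq _ _ (Nat.gcd_pos_of_pos_right p hq)
    ((-c / ((r - 1) * v - r) * v) ^ p.gcdA q * v ^ p.gcdB q) fun θ hroot hθv => ?_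
  subst hθv
  have hθ : θ ≠ 0 := fun h => hv0 (by rw [h, zero_pow hq.ne'])
  have hW0 : trinomialW r p q c ≠ 0 := ne_zero_of_mem_roots hroot
  refine ⟨rootMultiplicity_trinomialW_le_one hq hqp hpr hθ hv1, ?_⟩
  have hpow : θ ^ p = -c / ((r - 1) * θ ^ q - r) * θ ^ q := by
    rw [← pow_sub_mul_eq_neg_of_isRoot_trinomialW hqp' ((mem_roots hW0).mp hroot),
      mul_div_cancel_right₀ _ (sub_ne_zero.mpr hvr), pow_sub_mul_pow θ hqp']
  rw [pow_gcd_eq_zpow_mul_zpow hθ, hpow]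

end trinomialW

theorem count_relation_implies_r_eq_two_general
    (N : ℕ) (hN : 0 < N) (r : ℚ) (hr : 1 < r)
    (p q : Fin N → ℕ) (c : Fin N → ℂ)
    (hq : ∀ i, 1 ≤ q i) (hpq : ∀ i, q i < p i)
    (hratio : ∀ i, (p i : ℚ) / (q i : ℚ) = r)
    (W : Fin N → Polynomial ℂ)
    (hW : ∀ i, W i = Polynomial.C ((r : ℂ) - 1) * X ^ (p i)
        - Polynomial.C (r : ℂ) * X ^ (p i - q i) + Polynomial.C (c i))
    (P : Multiset ℂ) (hP : P = ∑ i, ((W i).roots.map (fun θ : ℂ => θ ^ (q i))))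
    (k₁ k₂ : ℕ) (hk₁ : k₁ = P.count 2)
    (hk₂ : k₂ = P.count (((r : ℂ) - 2) / ((r : ℂ) - 1)))
    (Pi : ℕ) (hPi : Pi = ∑ i, p i)
    (hrel : ((r : ℂ) - 2) * (Pi : ℂ) = (k₂ : ℂ) - (k₁ : ℂ) * ((r : ℂ) - 1)) :
    r = 2 := by
  have hpr : ∀ i, (p i : ℂ) = r * q i := fun i => by
    have hq0 : (q i : ℚ) ≠ 0 := by exact_mod_cast (Nat.one_le_iff_ne_zero.mp (hq i))
    exact_mod_cast (div_eq_iff hq0).mp (hratio i)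
  have hbound : ∀ v : ℂ, v ≠ 0 → v ≠ 1 → ((r : ℂ) - 1) * v ≠ r →
      (r.num : ℚ) * P.count v ≤ Pi := by
    intro v hv0 hv1 hvr
    have hcount : ∀ i, r.num * ((W i).roots.map (· ^ q i)).count v ≤ p i := fun i => calc
      _ ≤ r.num * (p i).gcd (q i) := by
        gcongr
        rw [hW i]
        exact count_map_pow_roots_trinomialW_le_gcd (hq i) (hpq i) (hpr i) hv0 hv1 hvr
      _ = p i := hratio i ▸ Rat.num_natCast_div_mul_gcd (hq i)
    have := Finset.sum_le_sum fun i (_ : i ∈ Finset.univ) => hcount i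
    rw [hP, Multiset.count_sum', hPi]
    push_cast
    rw [Finset.mul_sum]
    exact_mod_cast this
  have hPi0 : 0 < Pi := hPi ▸ Finset.sum_pos (fun i _ => Nat.zero_lt_of_lt (hpq i))
    (Finset.univ_nonempty_iff.mpr ⟨⟨0, hN⟩⟩)
  by_contra hr2
  have hr1 : (r : ℂ) - 1 ≠ 0 := sub_ne_zero.mpr (by exact_mod_cast hr.ne')
  have hr2' : (r : ℂ) - 2 ≠ 0 := sub_ne_zero.mpr (by exact_mod_cast hr2)
  refine sub_two_mul_ne_of_num_mul_le hr hr2 (by exact_mod_cast hPi0) (Nat.cast_nonneg _)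
    (Nat.cast_nonneg _) (hk₁ ▸ hbound 2 two_ne_zero (by norm_num) ?_)
    (hk₂ ▸ hbound _ (div_ne_zero hr2' hr1) ?_ ?_) (by exact_mod_cast hrel)
  · intro h; apply hr2'; linear_combination h
  · rw [ne_eq, div_eq_one_iff_eq hr1]; intro h; norm_num at h
  · rw [mul_div_cancel₀ _ hr1]; intro h; norm_num at h

/-- Given a family `W_i(θ) = (r-1)θ^{p_i} - r θ^{p_i-q_i} + c_i` with `p_i/q_i = r > 1`
and `c_i ≠ 0`, let `P` be the multiset of the `q_i`-th powers of the roots of the `W_i`,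
`k₁` the multiplicity of `2` in `P`, `k₂` the multiplicity of `(r-2)/(r-1)` in `P`, and
`Π = Σ p_i`. If `(r-2)·Π = k₂ - k₁·(r-1)`, then `r = 2`. -/
theorem count_relation_implies_r_eq_two
    (N : ℕ) (hN : 0 < N) (r : ℚ) (hr : 1 < r)
    (p q : Fin N → ℕ) (c : Fin N → ℂ)
    (hq : ∀ i, 1 ≤ q i) (hpq : ∀ i, q i < p i)
    (hratio : ∀ i, (p i : ℚ) / (q i : ℚ) = r)
    (hc : ∀ i, c i ≠ 0)
    (W : Fin N → Polynomial ℂ)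
    (hW : ∀ i, W i = Polynomial.C ((r : ℂ) - 1) * X ^ (p i)
        - Polynomial.C (r : ℂ) * X ^ (p i - q i) + Polynomial.C (c i))
    (P : Multiset ℂ) (hP : P = ∑ i, ((W i).roots.map (fun θ : ℂ => θ ^ (q i))))
    (k₁ k₂ : ℕ) (hk₁ : k₁ = P.count 2)
    (hk₂ : k₂ = P.count (((r : ℂ) - 2) / ((r : ℂ) - 1)))
    (Pi : ℕ) (hPi : Pi = ∑ i, p i)
    (hrel : ((r : ℂ) - 2) * (Pi : ℂ) = (k₂ : ℂ) - (k₁ : ℂ) * ((r : ℂ) - 1)) :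
    r = 2 :=
  count_relation_implies_r_eq_two_general N hN r hr p q c hq hpq hratio W hW P hP k₁ k₂ hk₁ hk₂ Pi
    hPi hrel
end

section
/- Let r > 1 be a rational number and let (p_i, q_i, c_i), i = 1, …, N, be a finite family with p_i, q_i positive integers, p_i > q_i, p_i/q_i = r for all i, and c_i ∈ ℂ \ {0}. Let W_i = W_{p_i,q_i,c_i}, let P be the multiset union over i of the q_i-th powers θ^{q_i} of the roots θ of W_i (with multiplicity), and let M be the multiset obtained from P by removing all copies of 2 and of (r−2)/(r−1). If M is invariant under the symmetry of ℂ with respect to 1, i.e., the multiset {2 − x : x ∈ M} equals M, then r = 2. -/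
/-!
The trinomial `W_i` has `p_i = r q_i` roots, and its coefficients vanish strictly between
degrees `p_i - q_i` and `p_i`, so Vieta and Newton's identities give
`(r - 1) ∑ θ^{q_i} = r q_i`. A value `v` with `(r - 1) v ≠ r` and `v ≠ 1` is the `q_i`-th power
of at most `gcd(q_i, p_i - q_i)` roots: such roots are simple (the derivative does not vanish
there), and both `θ^{q_i} = v` and `θ^{p_i - q_i} = -c_i / ((r - 1) v - r)` are fixed, hence so
is `θ^{gcd}` by Bézout. This gcd divides `p_i - 2 q_i = q_i (r - 2)`, so it is at most
`q_i |r - 2|`; and both `2` and `(r - 2)/(r - 1)` are such values `v`.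
Symmetry about `1` makes the sum of `M` equal to its size; comparing with the sum of `P` gives
`r Q (r - 2) = m_α - (r - 1) m_2` with `Q = ∑ q_i`, which the bounds `m_2, m_α ≤ Q |r - 2|`
rule out unless `r = 2`.
-/

open Polynomial

theorem Multiset.sum_map_pow_eq_of_esymm_eq_zero_s14 {R : Type*} [CommRing R] (s : Multiset R)
    {k : ℕ} (hk : 0 < k) (h : ∀ j ∈ Set.Ioo 0 k, s.esymm j = 0) :
    (s.map (· ^ k)).sum = (-1) ^ (k + 1) * k * s.esymm k := by
  classical
  have newton := congrArg (MvPolynomial.aeval (R := ℤ) fun x : s ↦ (x : R))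
    (MvPolynomial.psum_eq_mul_esymm_sub_sum s ℤ k hk)
  simp only [map_sub, map_mul, map_sum, map_pow, map_neg, map_one, map_natCast,
    MvPolynomial.aeval_esymm_eq_multiset_esymm, Multiset.map_univ_coe] at newton
  rw [Finset.sum_eq_zero fun a ha ↦ by rw [h a.1 (Finset.mem_filter.1 ha).2]; ring,
    sub_zero] at newton
  rw [← newton, MvPolynomial.psum]
  simp [map_sum, ← Multiset.map_univ_comp_coe s]

theorem pow_gcd_eq_zpow_gcdA_mul_zpow_gcdB {G : Type*} [GroupWithZero G] {θ : G} (hθ : θ ≠ 0)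
    (a b : ℕ) : θ ^ a.gcd b = (θ ^ a) ^ a.gcdA b * (θ ^ b) ^ a.gcdB b := by
  rw [← zpow_natCast, Nat.gcd_eq_gcd_ab, zpow_add₀ hθ, zpow_mul, zpow_mul, zpow_natCast,
    zpow_natCast]

namespace Polynomial

theorem trinomial_coeff_eq_zero {R : Type*} [Semiring R] {k m n j : ℕ} {u v w : R}
    (hk : j ≠ k) (hm : j ≠ m) (hn : j ≠ n) : (trinomial k m n u v w).coeff j = 0 := by
  simp [trinomial_def, hk, hm, hn]

variable {K : Type*} [Field K] {A B c : K} {p q : ℕ}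

theorem eval_trinomial_of_pow_eq {θ v : K} (hθ : θ ^ q = v) (hqp : q ≤ p) :
    (trinomial 0 (p - q) p c B A).eval θ = θ ^ (p - q) * (A * v + B) + c := by
  rw [trinomial_def, ← hθ]
  simp only [eval_add, eval_mul, eval_C, eval_pow, eval_X, pow_zero, mul_one]
  rw [show p = (p - q) + q by omega, pow_add, Nat.add_sub_cancel]
  ring

theorem eval_derivative_trinomial_of_pow_eq {θ v : K} (hθ : θ ^ q = v) (hq : 0 < q)
    (hqp : q < p) : (derivative (trinomial 0 (p - q) p c B A)).eval θ
      = θ ^ (p - q - 1) * (p * A * v + (p - q : ℕ) * B) := by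
  rw [trinomial_def, ← hθ]
  simp only [derivative_add, derivative_C_mul_X_pow, pow_zero, mul_one, derivative_C, zero_add,
    eval_add, eval_mul, eval_C, eval_pow, eval_X]
  rw [show p - 1 = (p - q - 1) + q by omega, pow_add]
  ring

theorem count_map_pow_roots_trinomial_le_gcd [DecidableEq K] (hc : c ≠ 0) (hq : 0 < q)
    (hqp : q < p) {v : K} (hv : A * v + B ≠ 0) (hcrit : p * A * v + (p - q : ℕ) * B ≠ 0) :
    ((trinomial 0 (p - q) p c B A).roots.map (· ^ q)).count v ≤ q.gcd (p - q) := by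
  set f := trinomial 0 (p - q) p c B A with hf
  have hf0 : f ≠ 0 := fun h ↦ hc <| by
    rw [← trinomial_trailing_coeff' (k := 0) (u := c) (v := B) (w := A)
      (by omega : 0 < p - q) (by omega : p - q < p), ← hf, h, coeff_zero]
  set F := f.roots.filter (fun θ ↦ v = θ ^ q)
  have hroot : ∀ θ ∈ F, θ ^ q = v ∧ θ ^ (p - q) * (A * v + B) + c = 0 := by
    intro θ hθ
    obtain ⟨hθf, hθv⟩ := Multiset.mem_filter.1 hθ
    exact ⟨hθv.symm, eval_trinomial_of_pow_eq hθv.symm hqp.le ▸ (mem_roots hf0).1 hθf⟩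
  have hne : ∀ θ ∈ F, θ ≠ 0 := by
    rintro θ hθ rfl
    obtain ⟨-, h⟩ := hroot 0 hθ
    simp [zero_pow (by omega : p - q ≠ 0), hc] at h
  have hnodup : F.Nodup := by
    refine Multiset.nodup_iff_count_le_one.2 fun θ ↦ ?_
    by_cases hθ : θ ∈ F
    · refine (Multiset.count_le_of_le θ (Multiset.filter_le _ _)).trans ?_
      rw [count_roots, ← not_lt, one_lt_rootMultiplicity_iff_isRoot hf0]
      rintro ⟨-, hd⟩
      rw [IsRoot, hf, eval_derivative_trinomial_of_pow_eq (hroot θ hθ).1 hq hqp] at hd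
      exact mul_ne_zero (pow_ne_zero _ (hne θ hθ)) hcrit hd
    · simp [Multiset.count_eq_zero_of_notMem hθ]
  have hsub : F ⊆ nthRoots (q.gcd (p - q))
      (v ^ q.gcdA (p - q) * (-c / (A * v + B)) ^ q.gcdB (p - q)) := by
    intro θ hθ
    obtain ⟨hθv, hθf⟩ := hroot θ hθ
    have hθy : θ ^ (p - q) = -c / (A * v + B) := by
      rw [eq_div_iff hv]
      linear_combination hθf
    rw [mem_nthRoots (Nat.gcd_pos_of_pos_left _ hq),
      pow_gcd_eq_zpow_gcdA_mul_zpow_gcdB (hne θ hθ), hθv, hθy]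
  rw [Multiset.count_map]
  exact (Multiset.card_le_card ((Multiset.le_iff_subset hnodup).2 hsub)).trans (card_nthRoots _ _)

section IsAlgClosed
variable [IsAlgClosed K]

theorem coeff_trinomial_eq_esymm_roots (hA : A ≠ 0) (hq : 0 < q) (hqp : q < p) {j : ℕ}
    (hj : j ≤ p) : (trinomial 0 (p - q) p c B A).coeff (p - j)
      = A * (-1) ^ j * (trinomial 0 (p - q) p c B A).roots.esymm j := by
  have hdeg := trinomial_natDegree (u := c) (v := B) (by omega : 0 < p - q) (by omega : p - q < p)
    hA
  rw [coeff_eq_esymm_roots_of_splits (IsAlgClosed.splits _) (by omega), hdeg,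
    trinomial_leadingCoeff (by omega : 0 < p - q) (by omega : p - q < p) hA,
    Nat.sub_sub_self hj]

theorem esymm_roots_trinomial_eq_zero (hA : A ≠ 0) (hq : 0 < q) (hqp : q < p)
    {j : ℕ} (hj : j ∈ Set.Ioo 0 q) : (trinomial 0 (p - q) p c B A).roots.esymm j = 0 := by
  obtain ⟨hj0, hjq⟩ := hj
  have h := coeff_trinomial_eq_esymm_roots (c := c) (B := B) hA hq hqp (j := j) (by omega)
  rw [trinomial_coeff_eq_zero (by omega) (by omega) (by omega)] at h
  simpa [hA] using h.symm

theorem sum_map_pow_roots_trinomial (hA : A ≠ 0) (hq : 0 < q) (hqp : q < p) :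
    A * ((trinomial 0 (p - q) p c B A).roots.map (· ^ q)).sum = -q * B := by
  have hB : B = A * (-1) ^ q * (trinomial 0 (p - q) p c B A).roots.esymm q := by
    rw [← coeff_trinomial_eq_esymm_roots hA hq hqp hqp.le,
      trinomial_middle_coeff (by omega : 0 < p - q) (by omega : p - q < p)]
  rw [Multiset.sum_map_pow_eq_of_esymm_eq_zero_s14 _ hq
    fun _ ↦ esymm_roots_trinomial_eq_zero hA hq hqp]
  nth_rw 2 [hB]
  ring

theorem card_roots_trinomial (hA : A ≠ 0) (hq : 0 < q) (hqp : q < p) :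
    Multiset.card (trinomial 0 (p - q) p c B A).roots = p := by
  rw [← (IsAlgClosed.splits _).natDegree_eq_card_roots,
    trinomial_natDegree (by omega : 0 < p - q) (by omega : p - q < p) hA]

end IsAlgClosed
end Polynomial

theorem count_map_pow_roots_le_gcd_of_natCast_eq {K : Type*} [Field K] [CharZero K]
    [DecidableEq K] {r c v : K} {p q : ℕ} (hq : 0 < q) (hqp : q < p) (hpq : (p : K) = r * q)
    (hr2 : r ≠ 2) (hc : c ≠ 0) (hv : v = 2 ∨ v = (r - 2) / (r - 1)) :
    ((trinomial 0 (p - q) p c (-r) (r - 1)).roots.map (· ^ q)).count v ≤ q.gcd (p - q) := by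
  have hr1' : r - 1 ≠ 0 := by
    rw [sub_ne_zero]
    rintro rfl
    rw [one_mul, Nat.cast_inj] at hpq
    omega
  have hr0 : r ≠ 0 := by
    rintro rfl
    rw [zero_mul, Nat.cast_eq_zero] at hpq
    omega
  have hq0 : (q : K) ≠ 0 := Nat.cast_ne_zero.2 hq.ne'
  have hsub : ((p - q : ℕ) : K) = (r - 1) * q := by
    rw [Nat.cast_sub hqp.le, hpq]
    ring
  have hcrit : (p : K) * (r - 1) * v + ((p - q : ℕ) : K) * -r = q * r * (r - 1) * (v - 1) := by
    rw [hsub, hpq]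
    ring
  refine count_map_pow_roots_trinomial_le_gcd hc hq hqp ?_ ?_
  · rcases hv with rfl | rfl
    · rw [show (r - 1) * 2 + -r = r - 2 by ring]
      exact sub_ne_zero.2 hr2
    · rw [mul_div_cancel₀ _ hr1', show r - 2 + -r = -2 by ring]
      exact neg_ne_zero.2 two_ne_zero
  · rw [hcrit]
    refine mul_ne_zero (by simp [hq0, hr0, hr1']) (sub_ne_zero.2 ?_)
    rcases hv with rfl | rfl
    · exact OfNat.ofNat_ne_one 2
    · rw [Ne, div_eq_one_iff_eq hr1']
      exact fun h ↦ one_ne_zero (by linear_combination -h : (1 : K) = 0)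

theorem Nat.cast_gcd_sub_le_mul_abs_sub_two {p q : ℕ} {r : ℚ} (hqp : q ≤ p)
    (hpq : (p : ℚ) = r * q) (hr2 : r ≠ 2) : (q.gcd (p - q) : ℚ) ≤ q * |r - 2| := by
  rcases q.eq_zero_or_pos with rfl | hq
  · simp_all
  have hne : (p : ℤ) - 2 * q ≠ 0 := by
    intro h
    have hq0 : (q : ℚ) ≠ 0 := Nat.cast_ne_zero.2 hq.ne'
    apply hr2
    have : (p : ℚ) - 2 * q = 0 := by exact_mod_cast h
    rw [hpq] at this
    exact mul_right_cancel₀ hq0 (by linear_combination this)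
  have hdvd : ((q.gcd (p - q) : ℕ) : ℤ) ∣ |(p : ℤ) - 2 * q| := by
    rw [dvd_abs, show (p : ℤ) - 2 * q = ((p - q : ℕ) : ℤ) - q by push_cast [hqp]; ring]
    exact (Int.natCast_dvd_natCast.2 (Nat.gcd_dvd_right q (p - q))).sub
      (Int.natCast_dvd_natCast.2 (Nat.gcd_dvd_left q (p - q)))
  have := Int.le_of_dvd (abs_pos.2 hne) hdvd
  have h2 : (q.gcd (p - q) : ℚ) ≤ |(p : ℚ) - 2 * q| := by exact_mod_cast this
  rwa [hpq, show r * q - 2 * q = q * (r - 2) by ring, abs_mul, Nat.abs_cast] at h2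

theorem Multiset.sum_eq_card_of_map_two_sub_eq {K : Type*} [Field K] [CharZero K]
    {M : Multiset K} (h : M.map (fun x ↦ 2 - x) = M) : M.sum = card M := by
  have hsum := congrArg Multiset.sum h
  rw [Multiset.sum_map_sub, Multiset.map_const', Multiset.sum_replicate, Multiset.map_id',
    nsmul_eq_mul] at hsum
  linear_combination (-1 / 2 : K) * hsum

theorem Multiset.filter_add_replicate_count_add_replicate_count {α : Type*} [DecidableEq α]
    {a b : α} (hab : a ≠ b) (P : Multiset α) :
    P.filter (fun x ↦ x ≠ a ∧ x ≠ b) + replicate (P.count a) a + replicate (P.count b) b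
      = P := by
  ext x
  simp only [count_add, count_filter, count_replicate]
  by_cases hxa : x = a <;> by_cases hxb : x = b <;> simp_all [eq_comm]

theorem eq_two_of_mul_sub_two_eq_sub {K : Type*} [Field K] [LinearOrder K] [IsStrictOrderedRing K]
    {r Q m n : K} (hr : 1 < r) (hQ : 0 < Q) (hm : 0 ≤ m) (hn : 0 ≤ n) (hmQ : m ≤ Q * |r - 2|)
    (hnQ : n ≤ Q * |r - 2|) (h : r * Q * (r - 2) = n - (r - 1) * m) : r = 2 := by
  rcases lt_trichotomy r 2 with hlt | heq | hgt
  · rw [abs_of_neg (by linarith)] at hmQ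
    nlinarith [mul_le_mul_of_nonneg_left hmQ (by linarith : (0 : K) ≤ r - 1)]
  · exact heq
  · rw [abs_of_pos (by linarith)] at hnQ
    nlinarith

theorem eq_two_of_map_two_sub_filter_eq {r Q : ℚ} (hr : 1 < r) (hQ : 0 < Q) {P : Multiset ℂ}
    (hcard : (Multiset.card P : ℚ) = r * Q) (hsum : ((r : ℂ) - 1) * P.sum = r * Q)
    (hcount : ∀ v, v = 2 ∨ v = ((r : ℂ) - 2) / ((r : ℂ) - 1) →
      (P.count v : ℚ) ≤ Q * |r - 2|)
    (hsym : (P.filter (fun x ↦ x ≠ 2 ∧ x ≠ ((r : ℂ) - 2) / ((r : ℂ) - 1))).map (2 - ·)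
      = P.filter (fun x ↦ x ≠ 2 ∧ x ≠ ((r : ℂ) - 2) / ((r : ℂ) - 1))) : r = 2 := by
  set α : ℂ := ((r : ℂ) - 2) / ((r : ℂ) - 1)
  have hα : ((r : ℂ) - 1) * α = r - 2 :=
    mul_div_cancel₀ _ (by exact_mod_cast (sub_pos.2 hr).ne')
  have hα2 : (2 : ℂ) ≠ α := fun h ↦ by
    have : (r : ℂ) = 0 := by linear_combination hα + ((r : ℂ) - 1) * h
    exact (zero_lt_one.trans hr).ne' (by exact_mod_cast this)
  have hP := Multiset.filter_add_replicate_count_add_replicate_count hα2 P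
  have hcardP := congrArg Multiset.card hP
  have hsumP := congrArg Multiset.sum hP
  simp only [Multiset.card_add, Multiset.card_replicate] at hcardP
  simp only [Multiset.sum_add, Multiset.sum_replicate, nsmul_eq_mul,
    Multiset.sum_eq_card_of_map_two_sub_eq hsym] at hsumP
  set M := P.filter (fun x ↦ x ≠ 2 ∧ x ≠ α)
  set m₂ := P.count 2
  set mα := P.count α
  have hbalance : (r - 1) * Multiset.card M + 2 * (r - 1) * m₂ + (r - 2) * mα = r * Q := by
    suffices ((r - 1) * Multiset.card M + 2 * (r - 1) * m₂ + (r - 2) * mα : ℂ) = r * Q by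
      exact_mod_cast this
    rw [← hsum, ← hsumP, ← hα]
    ring
  rw [← hcardP] at hcard
  push_cast at hcard
  exact eq_two_of_mul_sub_two_eq_sub hr hQ m₂.cast_nonneg mα.cast_nonneg (hcount 2 (.inl rfl))
    (hcount α (.inr rfl)) (by linear_combination hbalance - (r - 1) * hcard)

/-- Given a family `W_i(θ) = (r-1)θ^{p_i} - r θ^{p_i-q_i} + c_i` with `p_i/q_i = r > 1`
and `c_i ≠ 0`, let `P` be the multiset of the `q_i`-th powers of the roots of the `W_i`
and `M` the multiset obtained from `P` by removing all copies of `2` and `(r-2)/(r-1)`.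
If `M` is invariant under the symmetry `x ↦ 2 - x` of `ℂ` with respect to `1`,
then `r = 2`. -/
theorem symmetric_root_powers_imply_r_eq_two
    (N : ℕ) (hN : 0 < N) (r : ℚ) (hr : 1 < r)
    (p q : Fin N → ℕ) (c : Fin N → ℂ)
    (hq : ∀ i, 1 ≤ q i) (hpq : ∀ i, q i < p i)
    (hratio : ∀ i, (p i : ℚ) / (q i : ℚ) = r)
    (hc : ∀ i, c i ≠ 0)
    (W : Fin N → Polynomial ℂ)
    (hW : ∀ i, W i = Polynomial.C ((r : ℂ) - 1) * X ^ (p i)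
        - Polynomial.C (r : ℂ) * X ^ (p i - q i) + Polynomial.C (c i))
    (P : Multiset ℂ) (hP : P = ∑ i, ((W i).roots.map (fun θ : ℂ => θ ^ (q i))))
    (M : Multiset ℂ)
    (hM : M = P.filter (fun x : ℂ => x ≠ 2 ∧ x ≠ ((r : ℂ) - 2) / ((r : ℂ) - 1)))
    (hsym : M.map (fun x : ℂ => 2 - x) = M) :
    r = 2 := by
  by_contra hr2
  have hWi : ∀ i, W i = trinomial 0 (p i - q i) (p i) (c i) (-r) (r - 1) := fun i ↦ by
    rw [hW i, trinomial_def, map_neg]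
    ring
  have hpr : ∀ i, (p i : ℚ) = r * q i := fun i ↦ by
    rw [← hratio i, div_mul_cancel₀ _ (Nat.cast_ne_zero.2 (Nat.one_le_iff_ne_zero.1 (hq i)))]
  have hr1 : (r : ℂ) - 1 ≠ 0 := by exact_mod_cast (sub_pos.2 hr).ne'
  have hQ : (0 : ℚ) < ∑ i, (q i : ℚ) :=
    Finset.sum_pos (fun i _ ↦ by exact_mod_cast hq i) ⟨⟨0, hN⟩, Finset.mem_univ _⟩
  refine hr2 (eq_two_of_map_two_sub_filter_eq hr hQ ?_ ?_ ?_ (hM ▸ hsym))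
  · rw [hP, Multiset.card_sum]
    push_cast
    rw [Finset.mul_sum]
    refine Finset.sum_congr rfl fun i _ ↦ ?_
    rw [Multiset.card_map, hWi, card_roots_trinomial hr1 (hq i) (hpq i), hpr]
  · rw [hP, Multiset.sum_sum, Finset.mul_sum]
    push_cast [Finset.mul_sum]
    refine Finset.sum_congr rfl fun i _ ↦ ?_
    rw [hWi, sum_map_pow_roots_trinomial hr1 (hq i) (hpq i)]
    ring
  · intro v hv
    rw [hP, Multiset.count_sum']
    push_cast
    rw [Finset.sum_mul]
    refine Finset.sum_le_sum fun i _ ↦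
      le_trans ?_ (Nat.cast_gcd_sub_le_mul_abs_sub_two (hpq i).le (hpr i) hr2)
    rw [hWi]
    exact_mod_cast count_map_pow_roots_le_gcd_of_natCast_eq (hq i) (hpq i)
      (by exact_mod_cast hpr i) (by exact_mod_cast hr2) (hc i) hv
end
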